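/- Let F be a finite group of order 20 containing an element x of order 5 whose centralizer in F equals ⟨x⟩, and containing an element of order 4. Then F is isomorphic to the Frobenius group Frob₂₀ = C₅ ⋊ C₄ with faithful action; in particular F has trivial center and no element of order 10. -/

import Mathlib

/-- The action of `(ZMod 5)ˣ ≅ C₄` on `C₅ = Multiplicative (ZMod 5)` by
multiplication; this action is faithful. -/
def frobAction : (ZMod 5)ˣ →* MulAut (Multiplicative (ZMod 5)) :=
  MonoidHom.mk'
    (fun u => AddEquiv.toMultiplicative (DistribMulAction.toAddAut (ZMod 5)ˣ (ZMod 5) u))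
    (by intro a b; ext x; exact congrArg Multiplicative.ofAdd (mul_smul a b x.toAdd))

/-- The Frobenius group of order 20: `C₅ ⋊ C₄` with `C₄` acting faithfully. -/
def Frob20 : Type := Multiplicative (ZMod 5) ⋊[frobAction] (ZMod 5)ˣ

instance : Group Frob20 := SemidirectProduct.instGroup

namespace FrobAux

open Subgroup

/-- Discrete log base 2 on `(ZMod 5)ˣ`. -/
def ind (u : (ZMod 5)ˣ) : ℕ :=
  if (u : ZMod 5) = 2 then 1 else if (u : ZMod 5) = 4 then 2 else
    if (u : ZMod 5) = 3 then 3 else 0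

lemma ind_lt (u : (ZMod 5)ˣ) : ind u < 4 := by revert u; decide

lemma ind_eq_zero {u : (ZMod 5)ˣ} (h : ind u = 0) : u = 1 := by revert u h; decide

lemma coe_eq_two_pow (u : (ZMod 5)ˣ) : (u : ZMod 5) = 2 ^ ind u := by revert u; decide

lemma ind_mul (a b : (ZMod 5)ˣ) : ind (a * b) ≡ ind a + ind b [MOD 4] := by
  revert a b; decide

lemma zmod5_cases : ∀ a : ZMod 5, a ^ 4 = 1 → a ^ 2 ≠ 1 → a = 2 ∨ a = 3 := by decide

lemma zmod5_three_cube : ((3 : ZMod 5)) ^ 3 = 2 := by decide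

section

variable {F : Type*} [Group F] {x : F} (hx : orderOf x = 5)

include hx

lemma pow_val_add (a b : ZMod 5) : x ^ (a + b).val = x ^ a.val * x ^ b.val := by
  rw [← pow_add, pow_eq_pow_iff_modEq, hx, ZMod.val_add]
  exact Nat.mod_modEq _ _

lemma pow_val_mul (a b : ZMod 5) : x ^ (a * b).val = (x ^ a.val) ^ b.val := by
  rw [← pow_mul, pow_eq_pow_iff_modEq, hx, ZMod.val_mul]
  exact Nat.mod_modEq _ _

lemma pow_val_inj {a b : ZMod 5} (h : x ^ a.val = x ^ b.val) : a = b := by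
  rw [pow_eq_pow_iff_modEq, hx, Nat.ModEq,
    Nat.mod_eq_of_lt (ZMod.val_lt a), Nat.mod_eq_of_lt (ZMod.val_lt b)] at h
  exact ZMod.val_injective 5 h

lemma conj_iter {y : F} {m : ZMod 5} (hconj : y * x * y⁻¹ = x ^ m.val) :
    ∀ j : ℕ, y ^ j * x * (y ^ j)⁻¹ = x ^ ((m ^ j : ZMod 5)).val := by
  intro j
  induction j with
  | zero => simp [show ((1 : ZMod 5)).val = 1 from by decide]
  | succ j ih =>
    have hstep : y ^ (j + 1) * x * (y ^ (j + 1))⁻¹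
        = y * (y ^ j * x * (y ^ j)⁻¹) * y⁻¹ := by
      rw [pow_succ']
      group
    rw [hstep, ih, ← conj_pow, hconj, ← pow_val_mul hx, ← pow_succ']

end

end FrobAux

open Subgroup FrobAux in
/-- A finite group of order 20 with a self-centralizing element of order 5 and an
element of order 4 is isomorphic to the Frobenius group `Frob₂₀ = C₅ ⋊ C₄`; in
particular it has trivial center and no element of order 10. -/
theorem frobenius_twenty_recognition
    {F : Type*} [Group F] [Finite F] (hcard : Nat.card F = 20)
    {x : F} (hx : orderOf x = 5)
    (hcent : Subgroup.centralizer ({x} : Set F) = Subgroup.zpowers x)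
    (h4 : ∃ y : F, orderOf y = 4) :
    Nonempty (F ≃* Frob20) ∧ Subgroup.center F = ⊥ ∧ ¬ ∃ g : F, orderOf g = 10 := by
  obtain ⟨y₀, hy₀⟩ := h4
  haveI : Fact (Nat.Prime 5) := ⟨by norm_num⟩
  have hfact : (Nat.factorization 20) 5 = 1 := by
    rw [show (20 : ℕ) = 2 ^ 2 * 5 by norm_num,
      Nat.factorization_mul (by norm_num) (by norm_num), Nat.factorization_pow,
      Nat.Prime.factorization (by norm_num : Nat.Prime 2),
      Nat.Prime.factorization (by norm_num : Nat.Prime 5)]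
    simp [Finsupp.single_apply]
  have cardQ : ∀ Q : Sylow 5 F, Nat.card Q = 5 := fun Q => by
    rw [Q.card_eq_multiplicity, hcard, hfact, pow_one]
  -- there is a unique Sylow 5-subgroup
  have hsubsing : ∀ Q1 Q2 : Sylow 5 F, Q1 = Q2 := by
    obtain ⟨Q⟩ : Nonempty (Sylow 5 F) := inferInstance
    have hidx : (Q : Subgroup F).index = 4 := by
      have h := Subgroup.index_mul_card (Q : Subgroup F)
      rw [cardQ Q, hcard] at h
      omega
    have hdvd : Nat.card (Sylow 5 F) ∣ 4 := hidx ▸ Q.card_dvd_index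
    have hle : Nat.card (Sylow 5 F) ≤ 4 := Nat.le_of_dvd (by norm_num) hdvd
    have hmod : Nat.card (Sylow 5 F) % 5 = 1 % 5 := card_sylow_modEq_one 5 F
    have h1 : Nat.card (Sylow 5 F) = 1 := by omega
    intro Q1 Q2
    haveI := (Nat.card_eq_one_iff_unique.mp h1).1
    exact Subsingleton.elim Q1 Q2
  -- every element of order 5 generates the same subgroup as x
  have key : ∀ g : F, orderOf g = 5 → ∃ Q : Sylow 5 F, zpowers g = Q := by
    intro g hg
    have hpg : IsPGroup 5 (zpowers g) :=
      IsPGroup.of_card (by rw [Nat.card_zpowers, hg, pow_one])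
    obtain ⟨Q, hQ⟩ := hpg.exists_le_sylow
    refine ⟨Q, Subgroup.eq_of_le_of_card_ge hQ ?_⟩
    rw [cardQ Q, Nat.card_zpowers, hg]
  have L : ∀ g : F, orderOf g = 5 → zpowers g = zpowers x := by
    intro g hg
    obtain ⟨Q1, h1⟩ := key g hg
    obtain ⟨Q2, h2⟩ := key x hx
    rw [h1, h2, hsubsing Q1 Q2]
  -- no element of order 10
  have no10 : ¬ ∃ g : F, orderOf g = 10 := by
    rintro ⟨g, hg⟩
    have h2 : orderOf (g ^ 2) = 5 := by rw [orderOf_pow, hg]; norm_num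
    have hxg : x ∈ zpowers g := by
      have hx2 : x ∈ zpowers (g ^ 2) := by rw [L _ h2]; exact mem_zpowers x
      exact zpowers_le.mpr (Subgroup.pow_mem _ (mem_zpowers g) 2) hx2
    obtain ⟨k, hk⟩ := mem_zpowers_iff.mp hxg
    have hgc : g ∈ centralizer ({x} : Set F) := by
      rw [mem_centralizer_singleton_iff, ← hk]
      exact ((Commute.refl g).zpow_right k).eq
    rw [hcent] at hgc
    have hdg : orderOf g ∣ 5 := hx ▸ orderOf_dvd_of_mem_zpowers hgc
    rw [hg] at hdg
    norm_num at hdg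
  -- trivial center
  have hcenter : center F = ⊥ := by
    rw [eq_bot_iff]
    intro z hz
    rw [Subgroup.mem_bot]
    by_contra hne
    have hzc : z ∈ zpowers x := hcent ▸ center_le_centralizer {x} hz
    have hdvd : orderOf z ∣ 5 := hx ▸ orderOf_dvd_of_mem_zpowers hzc
    have hz5 : orderOf z = 5 := by
      rcases (Nat.Prime.eq_one_or_self_of_dvd (by norm_num) _ hdvd) with h | h
      · exact absurd (orderOf_eq_one_iff.mp h) hne
      · exact h
    have hxz : x ∈ zpowers z := by rw [L z hz5]; exact mem_zpowers x
    obtain ⟨k, hk⟩ := mem_zpowers_iff.mp hxz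
    have hy₀c : y₀ ∈ centralizer ({x} : Set F) := by
      rw [mem_centralizer_singleton_iff, ← hk]
      have hcz : Commute y₀ z := Subgroup.mem_center_iff.mp hz y₀
      exact (hcz.zpow_right k).eq
    rw [hcent] at hy₀c
    have hdy : orderOf y₀ ∣ 5 := hx ▸ orderOf_dvd_of_mem_zpowers hy₀c
    rw [hy₀] at hdy
    norm_num at hdy
  refine ⟨?_, hcenter, no10⟩
  -- conjugation by y₀ sends x to a power of x
  have hconj5 : orderOf (y₀ * x * y₀⁻¹) = 5 := by
    have h := orderOf_injective (MulAut.conj y₀).toMonoidHom (MulAut.conj y₀).injective x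
    simpa [MulAut.conj_apply] using h.trans hx
  have hmem : y₀ * x * y₀⁻¹ ∈ zpowers x := by
    rw [← L _ hconj5]; exact mem_zpowers _
  obtain ⟨k, hk⟩ := mem_zpowers_iff.mp hmem
  set m : ZMod 5 := (k : ZMod 5) with hm_def
  have hm : y₀ * x * y₀⁻¹ = x ^ m.val := by
    rw [← hk, hm_def]
    have h1 : x ^ k = x ^ (k % ((orderOf x : ℕ) : ℤ)) := (zpow_mod_orderOf x k).symm
    rw [h1, hx, ← zpow_natCast x (((k : ZMod 5)).val), ZMod.val_intCast]
  -- m has multiplicative order 4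
  have hm4 : m ^ 4 = 1 := by
    have h := conj_iter hx hm 4
    have h4 : y₀ ^ 4 = 1 := by rw [← hy₀]; exact pow_orderOf_eq_one y₀
    rw [h4, one_mul, inv_one, mul_one] at h
    have h1 : x ^ ((1 : ZMod 5)).val = x ^ ((m ^ 4 : ZMod 5)).val := by
      rw [show ((1 : ZMod 5)).val = 1 from rfl, pow_one]; exact h
    exact (pow_val_inj hx h1).symm
  have hm2 : m ^ 2 ≠ 1 := by
    intro hcon
    have h := conj_iter hx hm 2
    rw [hcon, show ((1 : ZMod 5)).val = 1 from rfl, pow_one] at h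
    have hc : y₀ ^ 2 ∈ centralizer ({x} : Set F) := by
      rw [mem_centralizer_singleton_iff]
      exact mul_inv_eq_iff_eq_mul.mp h
    rw [hcent] at hc
    have hd : orderOf (y₀ ^ 2) ∣ 5 := hx ▸ orderOf_dvd_of_mem_zpowers hc
    have ho : orderOf (y₀ ^ 2) = 2 := by rw [orderOf_pow, hy₀]; norm_num
    rw [ho] at hd
    norm_num at hd
  have hm23 : m = 2 ∨ m = 3 := by
    exact zmod5_cases m hm4 hm2
  -- normalize so that conjugation acts as multiplication by 2
  obtain ⟨y, hy4, hyc⟩ : ∃ y : F, orderOf y = 4 ∧ y * x * y⁻¹ = x ^ ((2 : ZMod 5)).val := by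
    rcases hm23 with h | h
    · exact ⟨y₀, hy₀, by rw [hm, h]⟩
    · refine ⟨y₀ ^ 3, ?_, ?_⟩
      · rw [orderOf_pow, hy₀]; norm_num
      · have h3 := conj_iter hx hm 3
        rw [h, zmod5_three_cube] at h3
        exact h3
  have hpc := conj_iter hx hyc
  -- the homomorphism from the semidirect product
  let fN : Multiplicative (ZMod 5) →* F :=
    MonoidHom.mk' (fun n => x ^ (n.toAdd.val)) (fun a b => pow_val_add hx a.toAdd b.toAdd)
  let fG : (ZMod 5)ˣ →* F := MonoidHom.mk' (fun u => y ^ ind u) (by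
    intro a b
    rw [← pow_add, pow_eq_pow_iff_modEq, hy4]
    exact ind_mul a b)
  have compat : ∀ u : (ZMod 5)ˣ,
      fN.comp (frobAction u).toMonoidHom = (MulAut.conj (fG u)).toMonoidHom.comp fN := by
    intro u
    refine MonoidHom.ext fun n => ?_
    show x ^ (((u : ZMod 5) * n.toAdd).val) = (y ^ ind u) * x ^ (n.toAdd.val) * (y ^ ind u)⁻¹
    rw [coe_eq_two_pow u, pow_val_mul hx, ← hpc (ind u), conj_pow]
  let Φ : (Multiplicative (ZMod 5) ⋊[frobAction] (ZMod 5)ˣ) →* F :=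
    SemidirectProduct.lift fN fG compat
  have hinj : Function.Injective Φ := by
    rw [injective_iff_map_eq_one]
    rintro ⟨n, u⟩ h
    have hΦ : x ^ (n.toAdd.val) * y ^ ind u = 1 := h
    have hyu : y ^ ind u ∈ zpowers x := by
      have h1 : x ^ (n.toAdd.val) = (y ^ ind u)⁻¹ := eq_inv_of_mul_eq_one_left hΦ
      have h2 : (y ^ ind u)⁻¹ ∈ zpowers x := h1 ▸ Subgroup.pow_mem _ (mem_zpowers x) _
      simpa using Subgroup.inv_mem _ h2
    have hd5 : orderOf (y ^ ind u) ∣ 5 := hx ▸ orderOf_dvd_of_mem_zpowers hyu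
    have hd4 : orderOf (y ^ ind u) ∣ 4 := hy4 ▸ orderOf_pow_dvd (ind u)
    have hone : y ^ ind u = 1 := by
      rw [← orderOf_eq_one_iff]
      have := Nat.dvd_gcd hd4 hd5
      simpa using this
    have hu : u = 1 := by
      have : orderOf y ∣ ind u := orderOf_dvd_iff_pow_eq_one.mpr hone
      rw [hy4] at this
      exact ind_eq_zero (Nat.eq_zero_of_dvd_of_lt this (ind_lt u))
    have hnx : x ^ (n.toAdd.val) = 1 := by
      rw [hone, mul_one] at hΦ; exact hΦ
    have hn : n = 1 := by
      have h5 : orderOf x ∣ n.toAdd.val := orderOf_dvd_iff_pow_eq_one.mpr hnx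
      rw [hx] at h5
      have hv : n.toAdd.val = 0 := Nat.eq_zero_of_dvd_of_lt h5 (ZMod.val_lt _)
      have : n.toAdd = 0 := (ZMod.val_eq_zero _).mp hv
      exact Multiplicative.toAdd.injective this
    rw [hn, hu]
    rfl
  have cardSDP : Nat.card (Multiplicative (ZMod 5) ⋊[frobAction] (ZMod 5)ˣ) = 20 := by
    have e : (Multiplicative (ZMod 5) ⋊[frobAction] (ZMod 5)ˣ) ≃
        Multiplicative (ZMod 5) × (ZMod 5)ˣ :=
      ⟨fun p => (p.left, p.right), fun q => ⟨q.1, q.2⟩, fun p => rfl, fun q => rfl⟩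
    rw [Nat.card_congr e, Nat.card_prod]
    have h1 : Nat.card (Multiplicative (ZMod 5)) = 5 := by
      rw [Nat.card_eq_fintype_card]; rfl
    have h2 : Nat.card ((ZMod 5)ˣ) = 4 := by
      rw [Nat.card_eq_fintype_card]; rfl
    rw [h1, h2]
  have hbij : Function.Bijective Φ :=
    (Nat.bijective_iff_injective_and_card Φ).mpr ⟨hinj, by rw [cardSDP, hcard]⟩
  exact ⟨(MulEquiv.ofBijective Φ hbij).symm⟩
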